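/- Let E ⊆ 𝔻 be relatively closed in 𝔻 with 𝔻 \ E nonempty, and suppose every bounded holomorphic function on 𝔻 \ E admits a holomorphic extension to 𝔻. Then the Möbius pseudo-distance of 𝔻 \ E coincides with the pseudo-hyperbolic distance: for all z, w ∈ 𝔻 \ E, sup { ρ(f(z), f(w)) : f holomorphic on 𝔻 \ E with f(𝔻 \ E) ⊆ 𝔻 } = ρ(z, w), where ρ(z,w) = |(z − w)/(1 − conj(w)·z)|. -/

import Mathlib

/-!
The Möbius map `ζ ↦ (ζ - w) / (1 - w̄ ζ)` restricted to `𝔻 \ E` attains `ρ(z, w)`; the work is the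
upper bound. The extension property forces `𝔻 \ E` to be dense in `𝔻`: for `x ∉ closure (𝔻 \ E)`
the bounded function `(ζ - x)⁻¹` would extend to some `F` with `F ζ (ζ - x) = 1` on all of `𝔻`
by the identity theorem, which fails at `x`. Hence the extension `F` of any `f : 𝔻 \ E → 𝔻` maps
`𝔻` into the closed disc, with `F w = f w` in the open disc, and the Schwarz–Pick lemma (the
Schwarz lemma conjugated by Möbius maps) gives `ρ(f z, f w) ≤ ρ(z, w)`.
-/

open Complex Metric Set

/-- `f` is bounded holomorphic on the open set `Ω`. -/
def BddHolo (f : ℂ → ℂ) (Ω : Set ℂ) : Prop :=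
  DifferentiableOn ℂ f Ω ∧ ∃ M : ℝ, ∀ z ∈ Ω, ‖f z‖ ≤ M

/-- The pseudo-hyperbolic distance on the open unit disc. -/
noncomputable def pseudoHyp (z w : ℂ) : ℝ :=
  ‖(z - w) / (1 - (starRingEnd ℂ) w * z)‖

open ComplexConjugate

noncomputable def moebius (a z : ℂ) : ℂ := (z - a) / (1 - conj a * z)

lemma pseudoHyp_eq_norm_moebius (z w : ℂ) : pseudoHyp z w = ‖moebius w z‖ := rfl

lemma pseudoHyp_zero_right (z : ℂ) : pseudoHyp z 0 = ‖z‖ := by simp [pseudoHyp]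

lemma moebius_self (a : ℂ) : moebius a a = 0 := by simp [moebius]

lemma moebius_zero (a : ℂ) : moebius a 0 = -a := by simp [moebius]

lemma norm_one_sub_conj_mul_sq_sub_norm_sub_sq (a z : ℂ) :
    ‖1 - conj a * z‖ ^ 2 - ‖z - a‖ ^ 2 = (1 - ‖a‖ ^ 2) * (1 - ‖z‖ ^ 2) := by
  simp only [Complex.sq_norm, normSq_apply, sub_re, sub_im, mul_re, mul_im, conj_re, conj_im,
    one_re, one_im]
  ring

lemma one_sub_conj_mul_ne_zero {a z : ℂ} (ha : ‖a‖ < 1) (hz : ‖z‖ ≤ 1) :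
    1 - conj a * z ≠ 0 := by
  intro h
  have : ‖conj a * z‖ < 1 := by
    rw [norm_mul, norm_conj]
    nlinarith [norm_nonneg a, norm_nonneg z]
  rw [← sub_eq_zero.mp h, norm_one] at this
  exact this.false

lemma norm_sub_le_norm_one_sub_conj_mul {a z : ℂ} (ha : ‖a‖ < 1) (hz : ‖z‖ ≤ 1) :
    ‖z - a‖ ≤ ‖1 - conj a * z‖ := by
  have := norm_one_sub_conj_mul_sq_sub_norm_sub_sq a z
  have : 0 ≤ (1 - ‖a‖ ^ 2) * (1 - ‖z‖ ^ 2) := by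
    apply mul_nonneg <;> nlinarith [norm_nonneg a, norm_nonneg z]
  exact (sq_le_sq₀ (norm_nonneg _) (norm_nonneg _)).mp (by linarith)

lemma norm_sub_lt_norm_one_sub_conj_mul {a z : ℂ} (ha : ‖a‖ < 1) (hz : ‖z‖ < 1) :
    ‖z - a‖ < ‖1 - conj a * z‖ := by
  have := norm_one_sub_conj_mul_sq_sub_norm_sub_sq a z
  have : 0 < (1 - ‖a‖ ^ 2) * (1 - ‖z‖ ^ 2) := by
    apply mul_pos <;> nlinarith [norm_nonneg a, norm_nonneg z]
  exact (sq_lt_sq₀ (norm_nonneg _) (norm_nonneg _)).mp (by linarith)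

lemma mapsTo_moebius_ball {a : ℂ} (ha : ‖a‖ < 1) :
    MapsTo (moebius a) (ball 0 1) (ball 0 1) := by
  intro z hz
  rw [mem_ball_zero_iff] at hz ⊢
  have hden := one_sub_conj_mul_ne_zero ha hz.le
  rw [moebius, norm_div, div_lt_one (norm_pos_iff.mpr hden)]
  exact norm_sub_lt_norm_one_sub_conj_mul ha hz

lemma mapsTo_moebius_closedBall {a : ℂ} (ha : ‖a‖ < 1) :
    MapsTo (moebius a) (closedBall 0 1) (closedBall 0 1) := by
  intro z hz
  rw [mem_closedBall_zero_iff] at hz ⊢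
  have hden := one_sub_conj_mul_ne_zero ha hz
  rw [moebius, norm_div, div_le_one (norm_pos_iff.mpr hden)]
  exact norm_sub_le_norm_one_sub_conj_mul ha hz

lemma differentiableOn_moebius {a : ℂ} (ha : ‖a‖ < 1) :
    DifferentiableOn ℂ (moebius a) (closedBall 0 1) :=
  DifferentiableOn.div (by fun_prop) (by fun_prop)
    fun _ hz ↦ one_sub_conj_mul_ne_zero ha (mem_closedBall_zero_iff.mp hz)

lemma moebius_neg_moebius {a z : ℂ} (ha : ‖a‖ < 1) (hz : ‖z‖ ≤ 1) :
    moebius (-a) (moebius a z) = z := by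
  have hden := one_sub_conj_mul_ne_zero ha hz
  have haa := one_sub_conj_mul_ne_zero ha ha.le
  have hnum : moebius a z - -a = (1 - conj a * a) * z / (1 - conj a * z) := by
    rw [moebius, div_sub' hden]
    ring_nf
  have hden' : 1 - conj (-a) * moebius a z = (1 - conj a * a) / (1 - conj a * z) := by
    rw [moebius, map_neg, neg_mul, sub_neg_eq_add, mul_div_assoc', one_add_div hden]
    ring_nf
  rw [moebius, hnum, hden', div_div_div_cancel_right₀ hden, mul_div_cancel_left₀ _ haa]

theorem pseudoHyp_le_of_mapsTo_closedBall {F : ℂ → ℂ} (hd : DifferentiableOn ℂ F (ball 0 1))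
    (hmaps : MapsTo F (ball 0 1) (closedBall 0 1)) {z w : ℂ} (hz : z ∈ ball (0 : ℂ) 1)
    (hw : w ∈ ball (0 : ℂ) 1) (hFw : F w ∈ ball (0 : ℂ) 1) :
    pseudoHyp (F z) (F w) ≤ pseudoHyp z w := by
  rw [mem_ball_zero_iff] at hz hw hFw
  have hw' : ‖-w‖ < 1 := by rwa [norm_neg]
  set g := moebius (F w) ∘ F ∘ moebius (-w)
  have hg_maps : MapsTo g (ball 0 1) (closedBall 0 1) :=
    (mapsTo_moebius_closedBall hFw).comp (hmaps.comp (mapsTo_moebius_ball hw'))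
  have hg_diff : DifferentiableOn ℂ g (ball 0 1) :=
    (differentiableOn_moebius hFw).comp (hd.comp ((differentiableOn_moebius hw').mono
      ball_subset_closedBall) (mapsTo_moebius_ball hw')) (hmaps.comp (mapsTo_moebius_ball hw'))
  have hg_zero : g 0 = 0 := by simp [g, moebius_zero, moebius_self]
  have hg_moebius : g (moebius w z) = moebius (F w) (F z) := by
    simp only [g, Function.comp_apply, moebius_neg_moebius hw hz.le]
  have hmz := mapsTo_moebius_ball hw (mem_ball_zero_iff.mpr hz)
  simpa only [pseudoHyp_eq_norm_moebius, hg_moebius] using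
    Complex.norm_le_norm_of_mapsTo_ball hg_diff hg_maps hg_zero (mem_ball_zero_iff.mp hmz)

lemma bddHolo_inv_sub_of_notMem_closure {Ω : Set ℂ} {x : ℂ} (hx : x ∉ closure Ω) :
    BddHolo (fun ζ ↦ (ζ - x)⁻¹) Ω := by
  obtain ⟨ε, hε, hball⟩ := Metric.isOpen_iff.mp isClosed_closure.isOpen_compl x hx
  have hfar : ∀ ζ ∈ Ω, ε ≤ ‖ζ - x‖ := fun ζ hζ ↦ by
    by_contra! h
    exact hball (mem_ball_iff_norm.mpr h) (subset_closure hζ)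
  refine ⟨DifferentiableOn.inv (by fun_prop) fun ζ hζ ↦ ?_, ε⁻¹, fun ζ hζ ↦ ?_⟩
  · exact norm_pos_iff.mp (hε.trans_le (hfar ζ hζ))
  · rw [norm_inv]
    exact inv_anti₀ hε (hfar ζ hζ)

theorem subset_closure_of_bddHolo_extend {U Ω : Set ℂ} (hU : IsOpen U)
    (hU_conn : IsPreconnected U) (hΩ : IsOpen Ω) {z₀ : ℂ} (hz₀U : z₀ ∈ U) (hz₀Ω : z₀ ∈ Ω)
    (hext : ∀ f : ℂ → ℂ, BddHolo f Ω → ∃ F : ℂ → ℂ, DifferentiableOn ℂ F U ∧ EqOn F f Ω) :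
    U ⊆ closure Ω := by
  intro x hxU
  by_contra hx
  obtain ⟨F, hFd, hFeq⟩ := hext _ (bddHolo_inv_sub_of_notMem_closure hx)
  have hG : AnalyticOnNhd ℂ (fun ζ ↦ F ζ * (ζ - x)) U :=
    (hFd.mul (by fun_prop)).analyticOnNhd hU
  have hG_one : (fun ζ ↦ F ζ * (ζ - x)) =ᶠ[nhds z₀] fun _ ↦ 1 := by
    filter_upwards [hΩ.mem_nhds hz₀Ω] with ζ hζ
    have hζx : ζ - x ≠ 0 := sub_ne_zero.mpr fun h ↦ hx (h ▸ subset_closure hζ)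
    rw [hFeq hζ, inv_mul_cancel₀ hζx]
  have := hG.eqOn_of_preconnected_of_eventuallyEq analyticOnNhd_const hU_conn hz₀U hG_one hxU
  simp at this

theorem stmt_9_general (E : Set ℂ)
    (hrelclosed : IsOpen (ball (0 : ℂ) 1 \ E))
    (hext : ∀ f : ℂ → ℂ, BddHolo f (ball (0 : ℂ) 1 \ E) →
      ∃ F : ℂ → ℂ, DifferentiableOn ℂ F (ball (0 : ℂ) 1) ∧
        ∀ z ∈ ball (0 : ℂ) 1 \ E, F z = f z) :
    ∀ z ∈ ball (0 : ℂ) 1 \ E, ∀ w ∈ ball (0 : ℂ) 1 \ E,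
      sSup {r : ℝ | ∃ f : ℂ → ℂ, DifferentiableOn ℂ f (ball (0 : ℂ) 1 \ E) ∧
          Set.MapsTo f (ball (0 : ℂ) 1 \ E) (ball (0 : ℂ) 1) ∧
          r = pseudoHyp (f z) (f w)} = pseudoHyp z w := by
  intro z hz w hw
  have hdense : ball (0 : ℂ) 1 ⊆ closure (ball 0 1 \ E) :=
    subset_closure_of_bddHolo_extend isOpen_ball (convex_ball 0 1).isPreconnected hrelclosed
      hz.1 hz hext
  have hw' : ‖w‖ < 1 := mem_ball_zero_iff.mp hw.1
  refine IsGreatest.csSup_eq ⟨⟨moebius w, (differentiableOn_moebius hw').mono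
    (sdiff_subset.trans ball_subset_closedBall), (mapsTo_moebius_ball hw').mono_left sdiff_subset,
    by rw [moebius_self, pseudoHyp_zero_right, pseudoHyp_eq_norm_moebius]⟩, ?_⟩
  rintro r ⟨f, hfd, hfmaps, rfl⟩
  obtain ⟨F, hFd, hFeq⟩ := hext f ⟨hfd, 1, fun ζ hζ ↦ (mem_ball_zero_iff.mp (hfmaps hζ)).le⟩
  have hFmaps : MapsTo F (ball 0 1) (closedBall 0 1) := fun ζ hζ ↦ by
    rw [← closure_ball (0 : ℂ) one_ne_zero]
    exact (hFd.continuousOn.continuousAt (isOpen_ball.mem_nhds hζ)).continuousWithinAt.mem_closure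
      (hdense hζ) (hfmaps.congr fun ζ hζ ↦ (hFeq ζ hζ).symm)
  rw [← hFeq z hz, ← hFeq w hw]
  exact pseudoHyp_le_of_mapsTo_closedBall hFd hFmaps hz.1 hw.1 (hFeq w hw ▸ hfmaps hw)

theorem stmt_9 (E : Set ℂ) (hE : E ⊆ ball (0 : ℂ) 1)
    (hrelclosed : IsOpen (ball (0 : ℂ) 1 \ E))
    (hne : (ball (0 : ℂ) 1 \ E).Nonempty)
    (hext : ∀ f : ℂ → ℂ, BddHolo f (ball (0 : ℂ) 1 \ E) →
      ∃ F : ℂ → ℂ, DifferentiableOn ℂ F (ball (0 : ℂ) 1) ∧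
        ∀ z ∈ ball (0 : ℂ) 1 \ E, F z = f z) :
    ∀ z ∈ ball (0 : ℂ) 1 \ E, ∀ w ∈ ball (0 : ℂ) 1 \ E,
      sSup {r : ℝ | ∃ f : ℂ → ℂ, DifferentiableOn ℂ f (ball (0 : ℂ) 1 \ E) ∧
          Set.MapsTo f (ball (0 : ℂ) 1 \ E) (ball (0 : ℂ) 1) ∧
          r = pseudoHyp (f z) (f w)} = pseudoHyp z w :=
  stmt_9_general E hrelclosed hext
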